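/- Optimal recovery error for the Cauchy problem for the heat equation on a time slice: Let d ∈ ℕ, D = ℝ^d × (0,∞), t₀ > 0, and let A₁, A₂ be the integral operators with kernels K₁((u,t),(v,s)) := (4π(t−s))^{−d/2} exp(−|u−v|²/(4(t−s))) for 0 < s < t (and 0 otherwise) and K₂((u,t),v) := (4πt)^{−d/2} exp(−|u−v|²/(4t)), so that x = A₁ f + A₂ g is the solution of ∂x/∂t − Δx = f on D, x(·,0) = g. Let M₁ ⊂ D and M₂ ⊂ ℝ^d be compact sets, W₁ = H̃^{ω_1}(M₁), W₂ = H̃^{ω_2}(M₂), with evaluation information at finite point sets Q₁ ⊂ M₁, Q₂ ⊂ M₂ known with errors e₁, e₂. Measuring the output in L¹ on the time slice N = ℝ^d × {t₀}, the error of optimal recovery of the operator Ā = (A₁ A₂) on W₁ × W₂ equals ∫_{ℝ^d} ∫_0^{t₀} τ̃₁(v,s) ds dv + ∫_{ℝ^d} τ̃₂(v) dv, where τ̃_i := τ̃_{ω_i,Q_i,e_i}, and the optimal method is Φ = Ā ∘ diag(L̃₁, L̃₂) with L̃_i := L̃_{ω_i,Q_i,e_i}. -/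

import Mathlib

open MeasureTheory intervalIntegral
open scoped ENNReal

/-- `τ_{ω,Q,e}` on the ambient space: `min_j (e_j + ω(ρ(t,q_j)))` on `M'`, `0` off `M'`. -/
noncomputable def tauOR {M : Type*} [MetricSpace M] (ω : ℝ → ℝ) (M' : Set M) {n : ℕ}
    (q : Fin n → M) (e : Fin n → ℝ) (t : M) : ℝ :=
  haveI := Classical.dec (t ∈ M')
  if t ∈ M' then ⨅ j, (e j + ω (dist t (q j))) else 0

/-- The truncated function `τ̃_{ω,Q,e}(t) = min { τ_{ω,Q,e}(t), ω(ρ(t,∂M')) }` on `M'`,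
and `0` off `M'`. -/
noncomputable def tauTildeOR {M : Type*} [MetricSpace M] (ω : ℝ → ℝ) (M' : Set M) {n : ℕ}
    (q : Fin n → M) (e : Fin n → ℝ) (t : M) : ℝ :=
  haveI := Classical.dec (t ∈ M')
  if t ∈ M' then
    min (⨅ j, (e j + ω (dist t (q j)))) (ω (Metric.infDist t (frontier M'))) else 0

/-- The method `L̃_{ω,Q,e}`: equal to `z_j` on the cell `Π̃_j = Π_j ∖ Π̃_0`, and `0`
on `Π̃_0 = {t ∈ M' : ω(ρ(t,∂M')) ≤ τ(t)}` and off `M'`. -/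
noncomputable def LmethTildeOR {M : Type*} [MetricSpace M] (ω : ℝ → ℝ) (M' : Set M) {n : ℕ}
    (q : Fin n → M) (e : Fin n → ℝ) (z : Fin n → ℝ) (t : M) : ℝ :=
  haveI := Classical.dec
  if t ∈ M' ∧ ¬ (ω (Metric.infDist t (frontier M')) ≤ tauOR ω M' q e t) then
    (if h : (Finset.univ.filter fun j => tauOR ω M' q e t = e j + ω (dist t (q j))).Nonempty
     then z ((Finset.univ.filter fun j => tauOR ω M' q e t = e j + ω (dist t (q j))).min' h)
     else 0)
  else 0

/-- The class `H̃^ω(M')`: continuous functions vanishing outside `M'` whose restriction to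
`M'` admits `ω` as a majorant of its modulus of continuity. -/
def HtildeOR {M : Type*} [MetricSpace M] (ω : ℝ → ℝ) (M' : Set M) : Set (M → ℝ) :=
  {x | Continuous x ∧ (∀ t ∉ M', x t = 0) ∧
    ∀ t ∈ M', ∀ t' ∈ M', |x t - x t'| ≤ ω (dist t t')}

/-!
The method `L̃` errs pointwise by at most `τ̃`: on the cell `Π̃_j` by the data error plus
`ω(ρ(t, q_j))`, on `Π̃₀` by `ω(ρ(t, ∂M'))`, since every function of `H̃^ω(M')` vanishes on `∂M'`.
The heat kernel is a probability density in each variable, so `(f, g) ↦ x(·, t₀)` is an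
`L¹`-contraction, and an isometry on nonnegative data; hence `Φ` errs by at most
`∫∫ τ̃₁ + ∫ τ̃₂`. Conversely `±(τ̃₁, τ̃₂)` lie in `W₁ × W₂` and both fit the zero data, so every
method errs by at least `‖Ā(τ̃₁, τ̃₂)‖_{L¹} = ∫∫ τ̃₁ + ∫ τ̃₂` on one of them.
-/

structure IsModulusOfContinuity (ω : ℝ → ℝ) : Prop where
  map_zero : ω 0 = 0
  continuousOn : ContinuousOn ω (Set.Ici 0)
  monotoneOn : MonotoneOn ω (Set.Ici 0)
  subadditive : ∀ s t : ℝ, 0 ≤ s → 0 ≤ t → ω (s + t) ≤ ω s + ω t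
  nonneg : ∀ s : ℝ, 0 ≤ s → 0 ≤ ω s

namespace IsModulusOfContinuity

variable {ω : ℝ → ℝ}

theorem le_add_of_le_add (hω : IsModulusOfContinuity ω) {a b c : ℝ} (ha : 0 ≤ a) (hb : 0 ≤ b)
    (hc : 0 ≤ c) (h : a ≤ b + c) : ω a ≤ ω b + ω c :=
  (hω.monotoneOn ha (add_nonneg hb hc) h).trans (hω.subadditive b c hb hc)

end IsModulusOfContinuity

section NoisySample

variable {M : Type*} {n : ℕ} {q : Fin n → M} {e : Fin n → ℝ}

def IsNoisySample (q : Fin n → M) (e : Fin n → ℝ) (f : M → ℝ) (z : Fin n → ℝ) : Prop :=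
  ∀ j, |z j - f (q j)| ≤ e j

theorem IsNoisySample.neg {f : M → ℝ} {z : Fin n → ℝ} (h : IsNoisySample q e f z) :
    IsNoisySample q e (-f) (-z) := fun j => by
  rw [Pi.neg_apply, Pi.neg_apply, ← neg_sub', abs_neg]
  exact h j

end NoisySample

section RecoveryOnMetricSpace

open Metric Set

variable {M : Type*} [MetricSpace M] {ω : ℝ → ℝ} {M' : Set M} {n : ℕ} {q : Fin n → M}
  {e : Fin n → ℝ} {t : M}

theorem tauOR_of_mem (ht : t ∈ M') : tauOR ω M' q e t = ⨅ j, (e j + ω (dist t (q j))) :=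
  if_pos ht

theorem tauTildeOR_eq_indicator :
    tauTildeOR ω M' q e =
      M'.indicator fun t => min (⨅ j, (e j + ω (dist t (q j)))) (ω (infDist t (frontier M'))) := by
  ext t
  by_cases ht : t ∈ M' <;> simp [tauTildeOR, ht]

theorem tauTildeOR_of_mem (ht : t ∈ M') :
    tauTildeOR ω M' q e t = min (⨅ j, (e j + ω (dist t (q j)))) (ω (infDist t (frontier M'))) :=
  if_pos ht

theorem tauTildeOR_of_notMem (ht : t ∉ M') : tauTildeOR ω M' q e t = 0 :=
  if_neg ht

theorem LmethTildeOR_of_notMem {z : Fin n → ℝ} (ht : t ∉ M') : LmethTildeOR ω M' q e z t = 0 :=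
  if_neg fun h => ht h.1

theorem norm_LmethTildeOR_le (z : Fin n → ℝ) (t : M) :
    ‖LmethTildeOR ω M' q e z t‖ ≤ ∑ j, ‖z j‖ := by
  unfold LmethTildeOR
  split_ifs
  · exact Finset.single_le_sum (fun j _ => norm_nonneg (z j)) (Finset.mem_univ _)
  all_goals simpa using Finset.sum_nonneg fun j _ => norm_nonneg (z j)

theorem neg_mem_HtildeOR {f : M → ℝ} (hf : f ∈ HtildeOR ω M') : -f ∈ HtildeOR ω M' :=
  ⟨hf.1.neg, fun t ht => by simp [hf.2.1 t ht], fun t ht t' ht' => by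
    rw [Pi.neg_apply, Pi.neg_apply, neg_sub_neg, abs_sub_comm]
    exact hf.2.2 t ht t' ht'⟩

theorem exists_bound_of_mem_HtildeOR (hM' : IsCompact M') {f : M → ℝ} (hf : f ∈ HtildeOR ω M') :
    ∃ C, ∀ t, ‖f t‖ ≤ C :=
  hf.1.bounded_above_of_compact_support (HasCompactSupport.intro hM' hf.2.1)

theorem abs_le_omega_infDist_frontier_of_mem_HtildeOR [PreconnectedSpace M] [NoncompactSpace M]
    (hM' : IsCompact M') {f : M → ℝ} (hf : f ∈ HtildeOR ω M') (ht : t ∈ M') :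
    |f t| ≤ ω (infDist t (frontier M')) := by
  have hne : (frontier M').Nonempty :=
    nonempty_frontier_iff.2 ⟨⟨t, ht⟩, fun h => noncompact_univ M (h ▸ hM')⟩
  obtain ⟨y, hy, hty⟩ :=
    (hM'.of_isClosed_subset isClosed_frontier hM'.isClosed.frontier_subset).exists_infDist_eq_dist
      hne t
  have hfy : f y = 0 :=
    closure_minimal (s := M'ᶜ) (t := f ⁻¹' {0}) hf.2.1 (isClosed_singleton.preimage hf.1)
      (frontier_subset_closure (by rwa [frontier_compl]))
  simpa [hfy, hty] using hf.2.2 t ht y (hM'.isClosed.frontier_subset hy)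

theorem LmethTildeOR_of_le_tauOR {z : Fin n → ℝ}
    (h : ω (infDist t (frontier M')) ≤ tauOR ω M' q e t) : LmethTildeOR ω M' q e z t = 0 :=
  if_neg fun h' => h'.2 h

variable [NeZero n]

theorem continuous_ciInf_add_omega_dist (hω : IsModulusOfContinuity ω) :
    Continuous fun t => ⨅ j, (e j + ω (dist t (q j))) := by
  simp_rw [← Finset.inf'_univ_eq_ciInf]
  exact Continuous.finset_inf'_apply Finset.univ_nonempty fun j _ => continuous_const.add
    (hω.continuousOn.comp_continuous (by fun_prop) fun _ => dist_nonneg)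

theorem ciInf_add_omega_dist_nonneg (hω : IsModulusOfContinuity ω) (he : ∀ j, 0 ≤ e j) :
    0 ≤ ⨅ j, (e j + ω (dist t (q j))) :=
  le_ciInf fun j => add_nonneg (he j) (hω.nonneg _ dist_nonneg)

theorem tauTildeOR_nonneg (hω : IsModulusOfContinuity ω) (he : ∀ j, 0 ≤ e j) (t : M) :
    0 ≤ tauTildeOR ω M' q e t := by
  rw [tauTildeOR_eq_indicator]
  exact indicator_nonneg (fun t _ =>
    le_min (ciInf_add_omega_dist_nonneg hω he) (hω.nonneg _ infDist_nonneg)) t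

theorem isNoisySample_tauTildeOR_zero (hω : IsModulusOfContinuity ω) (he : ∀ j, 0 ≤ e j)
    (hq : ∀ j, q j ∈ M') : IsNoisySample q e (tauTildeOR ω M' q e) 0 := fun j => by
  rw [Pi.zero_apply, zero_sub, abs_neg, abs_of_nonneg (tauTildeOR_nonneg hω he _),
    tauTildeOR_of_mem (hq j)]
  refine (min_le_left _ _).trans (ciInf_le_of_le (Finite.bddBelow_range _) j ?_)
  simp [hω.map_zero]

theorem min_ciInf_omega_le_add_omega_dist (hω : IsModulusOfContinuity ω) (t t' : M) :
    min (⨅ j, (e j + ω (dist t (q j)))) (ω (infDist t (frontier M')))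
      ≤ min (⨅ j, (e j + ω (dist t' (q j)))) (ω (infDist t' (frontier M'))) + ω (dist t t') := by
  rw [← min_add_add_right]
  refine min_le_min ?_ (hω.le_add_of_le_add infDist_nonneg infDist_nonneg dist_nonneg
    infDist_le_infDist_add_dist)
  obtain ⟨j, hj⟩ := exists_eq_ciInf_of_finite (f := fun j => e j + ω (dist t' (q j)))
  rw [← hj, add_assoc]
  refine ciInf_le_of_le (Finite.bddBelow_range _) j ?_
  gcongr
  exact hω.le_add_of_le_add dist_nonneg dist_nonneg dist_nonneg
    ((dist_triangle t t' (q j)).trans_eq (add_comm _ _))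

theorem tauTildeOR_mem_HtildeOR (hω : IsModulusOfContinuity ω) (he : ∀ j, 0 ≤ e j) :
    tauTildeOR ω M' q e ∈ HtildeOR ω M' := by
  refine ⟨?_, fun t ht => tauTildeOR_of_notMem ht, fun t ht t' ht' => ?_⟩
  · rw [tauTildeOR_eq_indicator]
    refine continuous_indicator (fun t ht => ?_) (Continuous.continuousOn ?_)
    · rw [infDist_zero_of_mem ht, hω.map_zero]
      exact min_eq_right (ciInf_add_omega_dist_nonneg hω he)
    · exact (continuous_ciInf_add_omega_dist hω).min
        (hω.continuousOn.comp_continuous (continuous_infDist_pt _) fun _ => infDist_nonneg)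
  · rw [tauTildeOR_of_mem ht, tauTildeOR_of_mem ht', abs_sub_le_iff]
    have hle := min_ciInf_omega_le_add_omega_dist (M' := M') (q := q) (e := e) hω t' t
    rw [dist_comm] at hle
    exact ⟨sub_le_iff_le_add'.2 (min_ciInf_omega_le_add_omega_dist hω t t'),
      sub_le_iff_le_add'.2 hle⟩

theorem exists_LmethTildeOR_eq_of_tauOR_lt (z : Fin n → ℝ) (ht : t ∈ M')
    (h : tauOR ω M' q e t < ω (infDist t (frontier M'))) :
    ∃ j, tauOR ω M' q e t = e j + ω (dist t (q j)) ∧ LmethTildeOR ω M' q e z t = z j := by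
  classical
  obtain ⟨j, hj⟩ := exists_eq_ciInf_of_finite (f := fun j => e j + ω (dist t (q j)))
  have hS : (Finset.univ.filter fun j => tauOR ω M' q e t = e j + ω (dist t (q j))).Nonempty :=
    ⟨j, by simp [tauOR_of_mem ht, hj]⟩
  refine ⟨_, (Finset.mem_filter.1 (Finset.min'_mem _ hS)).2, ?_⟩
  unfold LmethTildeOR
  rw [if_pos ⟨ht, not_le.2 h⟩, dif_pos (by convert hS)]

theorem abs_sub_LmethTildeOR_le [PreconnectedSpace M] [NoncompactSpace M] (hM' : IsCompact M')
    (hq : ∀ j, q j ∈ M') {f : M → ℝ} (hf : f ∈ HtildeOR ω M') {z : Fin n → ℝ}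
    (hz : IsNoisySample q e f z) (t : M) :
    |f t - LmethTildeOR ω M' q e z t| ≤ tauTildeOR ω M' q e t := by
  by_cases ht : t ∈ M'
  · rw [tauTildeOR_of_mem ht, ← tauOR_of_mem ht]
    rcases le_or_gt (ω (infDist t (frontier M'))) (tauOR ω M' q e t) with h | h
    · rw [LmethTildeOR_of_le_tauOR h, sub_zero, min_eq_right h]
      exact abs_le_omega_infDist_frontier_of_mem_HtildeOR hM' hf ht
    · obtain ⟨j, hj, hL⟩ := exists_LmethTildeOR_eq_of_tauOR_lt z ht h
      rw [hL, min_eq_left h.le, hj, add_comm]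
      calc |f t - z j| ≤ |f t - f (q j)| + |f (q j) - z j| := abs_sub_le _ _ _
        _ ≤ ω (dist t (q j)) + e j :=
          add_le_add (hf.2.2 t ht (q j) (hq j)) ((abs_sub_comm _ _).trans_le (hz j))
  · simp [hf.2.1 t ht, LmethTildeOR_of_notMem ht, tauTildeOR_of_notMem ht]

end RecoveryOnMetricSpace

section Measurability

open Metric Set

variable {M : Type*} [MetricSpace M] [MeasurableSpace M] [OpensMeasurableSpace M] {ω : ℝ → ℝ}
  {M' : Set M} {n : ℕ} {q : Fin n → M} {e : Fin n → ℝ}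

theorem measurable_tauOR [NeZero n] (hω : IsModulusOfContinuity ω) (hM' : IsClosed M') :
    Measurable (tauOR ω M' q e) := by
  have hτ : tauOR ω M' q e = M'.indicator fun t => ⨅ j, (e j + ω (dist t (q j))) := by
    ext t
    by_cases ht : t ∈ M' <;> simp [tauOR, ht]
  rw [hτ]
  exact (continuous_ciInf_add_omega_dist hω).measurable.indicator hM'.measurableSet

theorem measurable_LmethTildeOR [NeZero n] (hω : IsModulusOfContinuity ω) (hM' : IsClosed M')
    (z : Fin n → ℝ) : Measurable (LmethTildeOR ω M' q e z) := by
  -- `LmethTildeOR` only depends on `t` through finitely many measurable propositions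
  let L : (Fin n → Prop) × Prop → ℝ := fun P =>
    haveI := Classical.dec
    if P.2 then (if h : (Finset.univ.filter P.1).Nonempty then z ((Finset.univ.filter P.1).min' h)
      else 0) else 0
  have hτ := measurable_tauOR (q := q) (e := e) hω hM'
  have hω' : Continuous fun t => ω (infDist t (frontier M')) :=
    hω.continuousOn.comp_continuous (continuous_infDist_pt _) fun _ => infDist_nonneg
  change Measurable fun t => L (fun j => tauOR ω M' q e t = e j + ω (dist t (q j)),
    t ∈ M' ∧ ¬ ω (infDist t (frontier M')) ≤ tauOR ω M' q e t)
  refine (Measurable.of_discrete (f := L)).comp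
    (Measurable.prodMk (measurable_pi_iff.2 fun j => ?_) ?_)
  · exact measurableSet_setOfPred.1 (measurableSet_eq_fun hτ (measurable_const.add
      (hω.continuousOn.comp_continuous (by fun_prop) fun _ => dist_nonneg).measurable))
  · exact measurableSet_setOfPred.1
      (hM'.measurableSet.inter (measurableSet_le hω'.measurable hτ).compl)

theorem integrable_LmethTildeOR [NeZero n] {μ : MeasureTheory.Measure M}
    [MeasureTheory.IsFiniteMeasureOnCompacts μ] (hω : IsModulusOfContinuity ω) (hM' : IsCompact M')
    (z : Fin n → ℝ) : MeasureTheory.Integrable (LmethTildeOR ω M' q e z) μ :=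
  (MeasureTheory.Measure.integrableOn_of_bounded hM'.measure_lt_top.ne
    (measurable_LmethTildeOR hω hM'.isClosed z).aestronglyMeasurable
    (MeasureTheory.ae_of_all _ (norm_LmethTildeOR_le z))).integrable_of_forall_notMem_eq_zero
    fun _ => LmethTildeOR_of_notMem

end Measurability

section KernelOperator

open MeasureTheory Function

variable {X Y : Type*} [MeasurableSpace X] [MeasurableSpace Y] {μ : Measure X} {ν : Measure Y}
  [SFinite μ] [SFinite ν] {k : X → Y → ℝ}

theorem lintegral_lintegral_ofReal_mul_eq (hk : Measurable (uncurry k))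
    (hk1 : ∀ y, ∫⁻ x, ENNReal.ofReal (k x y) ∂μ = 1) {F : Y → ℝ≥0∞} (hF : Measurable F) :
    ∫⁻ x, ∫⁻ y, ENNReal.ofReal (k x y) * F y ∂ν ∂μ = ∫⁻ y, F y ∂ν := by
  rw [lintegral_lintegral_swap
    ((ENNReal.measurable_ofReal.comp hk).mul (hF.comp measurable_snd)).aemeasurable]
  refine lintegral_congr fun y => ?_
  rw [lintegral_mul_const _ (hk.of_uncurry_right.ennreal_ofReal), hk1, one_mul]

theorem lintegral_enorm_integral_mul_le (hk0 : ∀ x y, 0 ≤ k x y) (hk : Measurable (uncurry k))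
    (hk1 : ∀ y, ∫⁻ x, ENNReal.ofReal (k x y) ∂μ = 1) {h : Y → ℝ} (hh : Measurable h) :
    ∫⁻ x, ‖∫ y, k x y * h y ∂ν‖ₑ ∂μ ≤ ∫⁻ y, ‖h y‖ₑ ∂ν :=
  calc ∫⁻ x, ‖∫ y, k x y * h y ∂ν‖ₑ ∂μ ≤ ∫⁻ x, ∫⁻ y, ‖k x y * h y‖ₑ ∂ν ∂μ :=
        lintegral_mono fun x => enorm_integral_le_lintegral_enorm _
    _ = ∫⁻ x, ∫⁻ y, ENNReal.ofReal (k x y) * ‖h y‖ₑ ∂ν ∂μ := by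
        simp_rw [enorm_mul, Real.enorm_of_nonneg (hk0 _ _)]
    _ = ∫⁻ y, ‖h y‖ₑ ∂ν := lintegral_lintegral_ofReal_mul_eq hk hk1 hh.enorm

theorem lintegral_ofReal_integral_mul (hk0 : ∀ x y, 0 ≤ k x y) (hk : Measurable (uncurry k))
    (hk1 : ∀ y, ∫⁻ x, ENNReal.ofReal (k x y) ∂μ = 1) {h : Y → ℝ} (hh : Measurable h)
    (h0 : ∀ y, 0 ≤ h y) (hint : ∀ x, Integrable (fun y => k x y * h y) ν) :
    ∫⁻ x, ENNReal.ofReal (∫ y, k x y * h y ∂ν) ∂μ = ∫⁻ y, ENNReal.ofReal (h y) ∂ν := by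
  simp_rw [ofReal_integral_eq_lintegral_ofReal (hint _)
    (ae_of_all _ fun y => mul_nonneg (hk0 _ _) (h0 y)), ENNReal.ofReal_mul (hk0 _ _)]
  exact lintegral_lintegral_ofReal_mul_eq hk hk1 (ENNReal.measurable_ofReal.comp hh)

end KernelOperator

section HeatKernel

open MeasureTheory Real

variable {d : ℕ} {r : ℝ}

noncomputable def heatKernel (d : ℕ) (r : ℝ) (u v : EuclideanSpace ℝ (Fin d)) : ℝ :=
  (4 * π * r) ^ (-(d : ℝ) / 2) * exp (-(dist u v) ^ 2 / (4 * r))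

theorem heatKernel_nonneg (hr : 0 ≤ r) (u v : EuclideanSpace ℝ (Fin d)) :
    0 ≤ heatKernel d r u v :=
  mul_nonneg (rpow_nonneg (by positivity) _) (exp_nonneg _)

theorem heatKernel_comm (r : ℝ) (u v : EuclideanSpace ℝ (Fin d)) :
    heatKernel d r u v = heatKernel d r v u := by
  rw [heatKernel, heatKernel, dist_comm]

theorem measurable_heatKernel :
    Measurable fun p : ℝ × EuclideanSpace ℝ (Fin d) × EuclideanSpace ℝ (Fin d) =>
      heatKernel d p.1 p.2.1 p.2.2 := by
  unfold heatKernel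
  fun_prop

theorem integral_heatKernel (hr : 0 < r) (u : EuclideanSpace ℝ (Fin d)) :
    ∫ v, heatKernel d r u v = 1 := by
  have hgauss := GaussianFourier.integral_rexp_neg_mul_sq_norm
    (V := EuclideanSpace ℝ (Fin d)) (inv_pos.2 (by positivity : 0 < 4 * r))
  rw [finrank_euclideanSpace_fin] at hgauss
  have hexp : ∀ w : EuclideanSpace ℝ (Fin d), -‖w‖ ^ 2 / (4 * r) = -(4 * r)⁻¹ * ‖w‖ ^ 2 :=
    fun w => by ring
  simp_rw [heatKernel, MeasureTheory.integral_const_mul, dist_eq_norm,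
    integral_sub_left_eq_self (fun w => exp (-‖w‖ ^ 2 / (4 * r))), hexp, hgauss]
  rw [div_inv_eq_mul, mul_right_comm, mul_comm π, ← rpow_add (by positivity), neg_div,
    neg_add_cancel, rpow_zero]

theorem integrable_heatKernel (hr : 0 < r) (u : EuclideanSpace ℝ (Fin d)) :
    Integrable (heatKernel d r u) :=
  .of_integral_ne_zero (by rw [integral_heatKernel hr]; exact one_ne_zero)

theorem lintegral_ofReal_heatKernel_left (hr : 0 < r) (v : EuclideanSpace ℝ (Fin d)) :
    ∫⁻ u, ENNReal.ofReal (heatKernel d r u v) = 1 := by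
  simp_rw [heatKernel_comm r _ v]
  rw [← ofReal_integral_eq_lintegral_ofReal (integrable_heatKernel hr v)
    (ae_of_all _ (heatKernel_nonneg hr.le v)), integral_heatKernel hr, ENNReal.ofReal_one]

end HeatKernel

section HeatSemigroup

open MeasureTheory Function

variable {d : ℕ} {r C C₁ C₂ : ℝ} {g g₁ g₂ : EuclideanSpace ℝ (Fin d) → ℝ}

noncomputable def heatSemigroup (d : ℕ) (r : ℝ) (g : EuclideanSpace ℝ (Fin d) → ℝ)
    (u : EuclideanSpace ℝ (Fin d)) : ℝ :=
  ∫ v, heatKernel d r u v * g v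

theorem stronglyMeasurable_heatSemigroup {P : Type*} [MeasurableSpace P] {ρ : P → ℝ}
    {x : P → EuclideanSpace ℝ (Fin d)} {G : P → EuclideanSpace ℝ (Fin d) → ℝ}
    (hρ : Measurable ρ) (hx : Measurable x) (hG : Measurable (uncurry G)) :
    StronglyMeasurable fun p => heatSemigroup d (ρ p) (G p) (x p) :=
  ((measurable_heatKernel.comp ((hρ.comp measurable_fst).prodMk
    ((hx.comp measurable_fst).prodMk measurable_snd))).mul
      hG).stronglyMeasurable.integral_prod_right'

theorem heatSemigroup_nonneg (hr : 0 ≤ r) (hg : ∀ v, 0 ≤ g v) (u : EuclideanSpace ℝ (Fin d)) :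
    0 ≤ heatSemigroup d r g u :=
  integral_nonneg fun v => mul_nonneg (heatKernel_nonneg hr u v) (hg v)

theorem integrable_heatKernel_mul (hr : 0 < r) (hg : AEStronglyMeasurable g)
    (hgC : ∀ v, ‖g v‖ ≤ C) (u : EuclideanSpace ℝ (Fin d)) :
    Integrable fun v => heatKernel d r u v * g v := by
  simp_rw [mul_comm (heatKernel d r u _)]
  exact (integrable_heatKernel hr u).bdd_mul hg (ae_of_all _ hgC)

theorem norm_heatSemigroup_le (hr : 0 < r) (hgC : ∀ v, ‖g v‖ ≤ C)
    (u : EuclideanSpace ℝ (Fin d)) : ‖heatSemigroup d r g u‖ ≤ C := by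
  refine (MeasureTheory.norm_integral_le_of_norm_le ((integrable_heatKernel hr u).mul_const C)
    (ae_of_all _ fun v => ?_)).trans_eq ?_
  · rw [norm_mul, Real.norm_of_nonneg (heatKernel_nonneg hr.le u v)]
    exact mul_le_mul_of_nonneg_left (hgC v) (heatKernel_nonneg hr.le u v)
  · rw [MeasureTheory.integral_mul_const, integral_heatKernel hr, one_mul]

theorem heatSemigroup_sub (hr : 0 < r) (hg₁ : AEStronglyMeasurable g₁) (hg₁C : ∀ v, ‖g₁ v‖ ≤ C₁)
    (hg₂ : AEStronglyMeasurable g₂) (hg₂C : ∀ v, ‖g₂ v‖ ≤ C₂) (u : EuclideanSpace ℝ (Fin d)) :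
    heatSemigroup d r (g₁ - g₂) u = heatSemigroup d r g₁ u - heatSemigroup d r g₂ u := by
  simp_rw [heatSemigroup, Pi.sub_apply, mul_sub]
  exact integral_sub (integrable_heatKernel_mul hr hg₁ hg₁C u)
    (integrable_heatKernel_mul hr hg₂ hg₂C u)

theorem heatSemigroup_neg (r : ℝ) (g : EuclideanSpace ℝ (Fin d) → ℝ) :
    heatSemigroup d r (-g) = -heatSemigroup d r g := by
  ext u
  simp [heatSemigroup, MeasureTheory.integral_neg]

theorem lintegral_enorm_heatSemigroup_le (hr : 0 < r) (hg : Measurable g) :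
    ∫⁻ u, ‖heatSemigroup d r g u‖ₑ ≤ ∫⁻ v, ‖g v‖ₑ :=
  lintegral_enorm_integral_mul_le (heatKernel_nonneg hr.le)
    (measurable_heatKernel.comp (measurable_const.prodMk measurable_id))
    (lintegral_ofReal_heatKernel_left hr) hg

theorem lintegral_ofReal_heatSemigroup (hr : 0 < r) (hg : Measurable g) (hgC : ∀ v, ‖g v‖ ≤ C)
    (hg0 : ∀ v, 0 ≤ g v) :
    ∫⁻ u, ENNReal.ofReal (heatSemigroup d r g u) = ∫⁻ v, ENNReal.ofReal (g v) :=
  lintegral_ofReal_integral_mul (heatKernel_nonneg hr.le)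
    (measurable_heatKernel.comp (measurable_const.prodMk measurable_id))
    (lintegral_ofReal_heatKernel_left hr) hg hg0
    (integrable_heatKernel_mul hr hg.aestronglyMeasurable hgC)

end HeatSemigroup

section Duhamel

open MeasureTheory Function Set

variable {d : ℕ} {t₀ C C₁ C₂ C₃ C₄ : ℝ} {f f₁ f₂ : EuclideanSpace ℝ (Fin d) × ℝ → ℝ}
  {g g₁ g₂ : EuclideanSpace ℝ (Fin d) → ℝ}

noncomputable def heatSource (d : ℕ) (t₀ : ℝ) (f : EuclideanSpace ℝ (Fin d) × ℝ → ℝ)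
    (u : EuclideanSpace ℝ (Fin d)) : ℝ :=
  ∫ s in (0 : ℝ)..t₀, heatSemigroup d (t₀ - s) (fun v => f (v, s)) u

theorem heatSource_eq_setIntegral_Ioo (ht₀ : 0 ≤ t₀) (u : EuclideanSpace ℝ (Fin d)) :
    heatSource d t₀ f u = ∫ s in Ioo 0 t₀, heatSemigroup d (t₀ - s) (fun v => f (v, s)) u := by
  rw [heatSource, intervalIntegral.integral_of_le ht₀, integral_Ioc_eq_integral_Ioo]

theorem stronglyMeasurable_heatSemigroup_slice (t₀ : ℝ) (hf : Measurable f) :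
    StronglyMeasurable fun p : EuclideanSpace ℝ (Fin d) × ℝ =>
      heatSemigroup d (t₀ - p.2) (fun v => f (v, p.2)) p.1 :=
  stronglyMeasurable_heatSemigroup (measurable_const.sub measurable_snd) measurable_fst
    (hf.comp (measurable_snd.prodMk (measurable_snd.comp measurable_fst)))

theorem stronglyMeasurable_heatSource (ht₀ : 0 ≤ t₀) (hf : Measurable f) :
    StronglyMeasurable (heatSource d t₀ f) := by
  simp_rw [funext (heatSource_eq_setIntegral_Ioo ht₀)]
  exact (stronglyMeasurable_heatSemigroup_slice t₀ hf).integral_prod_right'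

theorem integrableOn_heatSemigroup_slice (hf : Measurable f) (hfC : ∀ p, ‖f p‖ ≤ C)
    (u : EuclideanSpace ℝ (Fin d)) :
    IntegrableOn (fun s => heatSemigroup d (t₀ - s) (fun v => f (v, s)) u) (Ioo 0 t₀) :=
  Measure.integrableOn_of_bounded measure_Ioo_lt_top.ne
    ((stronglyMeasurable_heatSemigroup_slice t₀ hf).comp_measurable
      measurable_prodMk_left).aestronglyMeasurable
    ((ae_restrict_iff' measurableSet_Ioo).2 (ae_of_all _ fun s hs =>
      norm_heatSemigroup_le (sub_pos.2 hs.2) (fun v => hfC (v, s)) u))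

theorem heatSource_nonneg (ht₀ : 0 ≤ t₀) (hf : ∀ p, 0 ≤ f p) (u : EuclideanSpace ℝ (Fin d)) :
    0 ≤ heatSource d t₀ f u :=
  intervalIntegral.integral_nonneg ht₀ fun s hs =>
    heatSemigroup_nonneg (sub_nonneg.2 hs.2) (fun v => hf (v, s)) u

theorem heatSource_sub (ht₀ : 0 ≤ t₀) (hf₁ : Measurable f₁) (hf₁C : ∀ p, ‖f₁ p‖ ≤ C₁)
    (hf₂ : Measurable f₂) (hf₂C : ∀ p, ‖f₂ p‖ ≤ C₂) (u : EuclideanSpace ℝ (Fin d)) :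
    heatSource d t₀ (f₁ - f₂) u = heatSource d t₀ f₁ u - heatSource d t₀ f₂ u := by
  simp_rw [heatSource_eq_setIntegral_Ioo ht₀]
  rw [← integral_sub (integrableOn_heatSemigroup_slice hf₁ hf₁C u)
    (integrableOn_heatSemigroup_slice hf₂ hf₂C u)]
  refine setIntegral_congr_fun measurableSet_Ioo fun s hs => ?_
  exact heatSemigroup_sub (sub_pos.2 hs.2) (hf₁.comp measurable_prodMk_right).aestronglyMeasurable
    (fun v => hf₁C (v, s)) (hf₂.comp measurable_prodMk_right).aestronglyMeasurable
    (fun v => hf₂C (v, s)) u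

theorem heatSource_neg (t₀ : ℝ) (f : EuclideanSpace ℝ (Fin d) × ℝ → ℝ) :
    heatSource d t₀ (-f) = -heatSource d t₀ f := by
  ext u
  simp only [heatSource, Pi.neg_apply, ← intervalIntegral.integral_neg]
  exact intervalIntegral.integral_congr fun s _ =>
    congr_fun (heatSemigroup_neg (t₀ - s) fun v => f (v, s)) u

theorem lintegral_enorm_heatSource_le (ht₀ : 0 ≤ t₀) (hf : Measurable f) :
    ∫⁻ u, ‖heatSource d t₀ f u‖ₑ ≤ ∫⁻ v, ∫⁻ s in Ioc 0 t₀, ‖f (v, s)‖ₑ := by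
  have hG := (stronglyMeasurable_heatSemigroup_slice t₀ hf).measurable.enorm
  calc ∫⁻ u, ‖heatSource d t₀ f u‖ₑ
      ≤ ∫⁻ u, ∫⁻ s in Ioo 0 t₀, ‖heatSemigroup d (t₀ - s) (fun v => f (v, s)) u‖ₑ := by
        simp_rw [heatSource_eq_setIntegral_Ioo ht₀]
        exact lintegral_mono fun u => enorm_integral_le_lintegral_enorm _
    _ = ∫⁻ s in Ioo 0 t₀, ∫⁻ u, ‖heatSemigroup d (t₀ - s) (fun v => f (v, s)) u‖ₑ :=
        lintegral_lintegral_swap hG.aemeasurable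
    _ ≤ ∫⁻ s in Ioo 0 t₀, ∫⁻ v, ‖f (v, s)‖ₑ := setLIntegral_mono' measurableSet_Ioo fun s hs =>
        lintegral_enorm_heatSemigroup_le (sub_pos.2 hs.2) (hf.comp measurable_prodMk_right)
    _ = ∫⁻ v, ∫⁻ s in Ioc 0 t₀, ‖f (v, s)‖ₑ := by
        rw [lintegral_lintegral_swap (hf.comp measurable_swap).enorm.aemeasurable,
          Measure.restrict_congr_set Ioo_ae_eq_Ioc]

theorem lintegral_ofReal_heatSource (ht₀ : 0 ≤ t₀) (hf : Measurable f) (hfC : ∀ p, ‖f p‖ ≤ C)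
    (hf0 : ∀ p, 0 ≤ f p) :
    ∫⁻ u, ENNReal.ofReal (heatSource d t₀ f u)
      = ∫⁻ v, ∫⁻ s in Ioc 0 t₀, ENNReal.ofReal (f (v, s)) := by
  have hG := (stronglyMeasurable_heatSemigroup_slice t₀ hf).measurable.ennreal_ofReal
  calc ∫⁻ u, ENNReal.ofReal (heatSource d t₀ f u)
      = ∫⁻ u, ∫⁻ s in Ioo 0 t₀,
          ENNReal.ofReal (heatSemigroup d (t₀ - s) (fun v => f (v, s)) u) := by
        refine lintegral_congr fun u => ?_
        rw [heatSource_eq_setIntegral_Ioo ht₀, ofReal_integral_eq_lintegral_ofReal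
          (integrableOn_heatSemigroup_slice hf hfC u) ((ae_restrict_iff' measurableSet_Ioo).2
            (ae_of_all _ fun s hs =>
              heatSemigroup_nonneg (sub_nonneg.2 hs.2.le) (fun v => hf0 _) u))]
    _ = ∫⁻ s in Ioo 0 t₀, ∫⁻ u, ENNReal.ofReal (heatSemigroup d (t₀ - s) (fun v => f (v, s)) u) :=
        lintegral_lintegral_swap hG.aemeasurable
    _ = ∫⁻ s in Ioo 0 t₀, ∫⁻ v, ENNReal.ofReal (f (v, s)) :=
        setLIntegral_congr_fun measurableSet_Ioo fun s hs =>
          lintegral_ofReal_heatSemigroup (sub_pos.2 hs.2) (hf.comp measurable_prodMk_right)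
            (fun v => hfC (v, s)) (fun v => hf0 (v, s))
    _ = ∫⁻ v, ∫⁻ s in Ioc 0 t₀, ENNReal.ofReal (f (v, s)) := by
        rw [lintegral_lintegral_swap (hf.comp measurable_swap).ennreal_ofReal.aemeasurable,
          Measure.restrict_congr_set Ioo_ae_eq_Ioc]

noncomputable def heatSolution (d : ℕ) (t₀ : ℝ) (f : EuclideanSpace ℝ (Fin d) × ℝ → ℝ)
    (g : EuclideanSpace ℝ (Fin d) → ℝ) (u : EuclideanSpace ℝ (Fin d)) : ℝ :=
  heatSource d t₀ f u + heatSemigroup d t₀ g u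

theorem aestronglyMeasurable_heatSolution (ht₀ : 0 ≤ t₀) (hf : Measurable f)
    (hg : Measurable g) : AEStronglyMeasurable (heatSolution d t₀ f g) :=
  ((stronglyMeasurable_heatSource ht₀ hf).add (stronglyMeasurable_heatSemigroup
    (G := fun _ => g) measurable_const measurable_id (hg.comp measurable_snd))).aestronglyMeasurable

theorem heatSolution_sub (ht₀ : 0 < t₀) (hf₁ : Measurable f₁) (hf₁C : ∀ p, ‖f₁ p‖ ≤ C₁)
    (hf₂ : Measurable f₂) (hf₂C : ∀ p, ‖f₂ p‖ ≤ C₂) (hg₁ : Measurable g₁)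
    (hg₁C : ∀ v, ‖g₁ v‖ ≤ C₃) (hg₂ : Measurable g₂) (hg₂C : ∀ v, ‖g₂ v‖ ≤ C₄) :
    heatSolution d t₀ (f₁ - f₂) (g₁ - g₂) = heatSolution d t₀ f₁ g₁ - heatSolution d t₀ f₂ g₂ := by
  ext u
  rw [heatSolution, heatSource_sub ht₀.le hf₁ hf₁C hf₂ hf₂C, heatSemigroup_sub ht₀
    hg₁.aestronglyMeasurable hg₁C hg₂.aestronglyMeasurable hg₂C, Pi.sub_apply, heatSolution,
    heatSolution]
  ring

theorem heatSolution_neg (t₀ : ℝ) (f : EuclideanSpace ℝ (Fin d) × ℝ → ℝ)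
    (g : EuclideanSpace ℝ (Fin d) → ℝ) :
    heatSolution d t₀ (-f) (-g) = -heatSolution d t₀ f g := by
  ext u
  simp only [heatSolution, heatSource_neg, heatSemigroup_neg, Pi.neg_apply, neg_add]

theorem eLpNorm_heatSolution_le (ht₀ : 0 < t₀) (hf : Measurable f) (hg : Measurable g) :
    eLpNorm (heatSolution d t₀ f g) 1 volume
      ≤ (∫⁻ v, ∫⁻ s in Ioc 0 t₀, ‖f (v, s)‖ₑ) + ∫⁻ v, ‖g v‖ₑ := by
  rw [eLpNorm_one_eq_lintegral_enorm]
  calc ∫⁻ u, ‖heatSolution d t₀ f g u‖ₑ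
      ≤ ∫⁻ u, (‖heatSource d t₀ f u‖ₑ + ‖heatSemigroup d t₀ g u‖ₑ) :=
        lintegral_mono fun u => enorm_add_le _ _
    _ = (∫⁻ u, ‖heatSource d t₀ f u‖ₑ) + ∫⁻ u, ‖heatSemigroup d t₀ g u‖ₑ :=
        lintegral_add_left (stronglyMeasurable_heatSource ht₀.le hf).measurable.enorm _
    _ ≤ _ := add_le_add (lintegral_enorm_heatSource_le ht₀.le hf)
        (lintegral_enorm_heatSemigroup_le ht₀ hg)

theorem eLpNorm_heatSolution_of_nonneg (ht₀ : 0 < t₀) (hf : Measurable f) (hfC : ∀ p, ‖f p‖ ≤ C₁)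
    (hf0 : ∀ p, 0 ≤ f p) (hg : Measurable g) (hgC : ∀ v, ‖g v‖ ≤ C₂) (hg0 : ∀ v, 0 ≤ g v) :
    eLpNorm (heatSolution d t₀ f g) 1 volume
      = (∫⁻ v, ∫⁻ s in Ioc 0 t₀, ENNReal.ofReal (f (v, s))) + ∫⁻ v, ENNReal.ofReal (g v) := by
  rw [eLpNorm_one_eq_lintegral_enorm]
  calc ∫⁻ u, ‖heatSolution d t₀ f g u‖ₑ
      = ∫⁻ u, (ENNReal.ofReal (heatSource d t₀ f u) + ENNReal.ofReal (heatSemigroup d t₀ g u)) :=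
        lintegral_congr fun u => by
          have h₁ := heatSource_nonneg ht₀.le hf0 u
          have h₂ := heatSemigroup_nonneg ht₀.le hg0 u
          rw [heatSolution, Real.enorm_of_nonneg (add_nonneg h₁ h₂), ENNReal.ofReal_add h₁ h₂]
    _ = _ := by
        rw [lintegral_add_left (stronglyMeasurable_heatSource ht₀.le hf).measurable.ennreal_ofReal,
          lintegral_ofReal_heatSource ht₀.le hf hfC hf0,
          lintegral_ofReal_heatSemigroup ht₀ hg hgC hg0]

theorem memLp_heatSolution (ht₀ : 0 < t₀) (hf : Measurable f) (hg : Measurable g)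
    (hfi : Integrable f) (hgi : Integrable g) : MemLp (heatSolution d t₀ f g) 1 volume := by
  refine ⟨aestronglyMeasurable_heatSolution ht₀.le hf hg,
    (eLpNorm_heatSolution_le ht₀ hf hg).trans_lt (ENNReal.add_lt_top.2 ⟨?_, hgi.2⟩)⟩
  calc ∫⁻ v, ∫⁻ s in Ioc 0 t₀, ‖f (v, s)‖ₑ ≤ ∫⁻ v, ∫⁻ s, ‖f (v, s)‖ₑ :=
        lintegral_mono fun v => setLIntegral_le_lintegral _ _
    _ = ∫⁻ p, ‖f p‖ₑ := by rw [Measure.volume_eq_prod, lintegral_prod _ hf.enorm.aemeasurable]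
    _ < ⊤ := hfi.2

end Duhamel

section OptimalRecovery

open MeasureTheory

variable {F Z α : Type*} [MeasurableSpace α] {μ : Measure α} {W : Set F} {adm : F → Z → Prop}
  {S : F → α → ℝ}

noncomputable def worstCaseError (W : Set F) (adm : F → Z → Prop) (S : F → α → ℝ)
    (μ : Measure α) (Φ : Z → α → ℝ) : ℝ≥0∞ :=
  ⨆ x ∈ W, ⨆ z, ⨆ (_ : adm x z), eLpNorm (fun u => S x u - Φ z u) 1 μ

theorem eLpNorm_sub_le_worstCaseError {x : F} {z : Z} (hx : x ∈ W) (hz : adm x z)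
    (Φ : Z → α → ℝ) : eLpNorm (fun u => S x u - Φ z u) 1 μ ≤ worstCaseError W adm S μ Φ :=
  le_iSup₂_of_le x hx (le_iSup₂_of_le z hz le_rfl)

/-- No method can tell `S x` from `S x' = -S x` when both fit the same data `z`, so it errs by
at least `‖S x‖` on one of them. -/
theorem eLpNorm_le_worstCaseError {x x' : F} {z : Z} (hx : x ∈ W) (hx' : x' ∈ W)
    (hz : adm x z) (hz' : adm x' z) (hS : S x' = -S x) (hSx : AEStronglyMeasurable (S x) μ)
    {Φ : Z → α → ℝ} (hΦ : AEStronglyMeasurable (Φ z) μ) :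
    eLpNorm (S x) 1 μ ≤ worstCaseError W adm S μ Φ := by
  have key : 2 * eLpNorm (S x) 1 μ ≤ 2 * worstCaseError W adm S μ Φ :=
    calc 2 * eLpNorm (S x) 1 μ = eLpNorm ((S x - Φ z) - (S x' - Φ z)) 1 μ := by
          rw [sub_sub_sub_cancel_right, hS, sub_neg_eq_add, ← two_smul ℝ, eLpNorm_const_smul,
            Real.enorm_of_nonneg zero_le_two, ENNReal.ofReal_ofNat]
      _ ≤ eLpNorm (S x - Φ z) 1 μ + eLpNorm (S x' - Φ z) 1 μ :=
          eLpNorm_sub_le (hSx.sub hΦ) ((hS ▸ hSx.neg).sub hΦ) le_rfl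
      _ ≤ worstCaseError W adm S μ Φ + worstCaseError W adm S μ Φ :=
          add_le_add (eLpNorm_sub_le_worstCaseError hx hz Φ)
            (eLpNorm_sub_le_worstCaseError hx' hz' Φ)
      _ = 2 * worstCaseError W adm S μ Φ := (two_mul _).symm
  exact (ENNReal.mul_le_mul_iff_right two_ne_zero ENNReal.ofNat_ne_top).1 key

theorem iInf_worstCaseError_eq {Φ₀ : Z → α → ℝ} (hΦ₀ : ∀ z, MemLp (Φ₀ z) 1 μ) {x x' : F} {z : Z}
    (hx : x ∈ W) (hx' : x' ∈ W) (hz : adm x z) (hz' : adm x' z) (hS : S x' = -S x)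
    (hSx : AEStronglyMeasurable (S x) μ)
    (hΦ₀_le : worstCaseError W adm S μ Φ₀ ≤ eLpNorm (S x) 1 μ) :
    (⨅ Φ : {Φ : Z → α → ℝ // ∀ z, MemLp (Φ z) 1 μ}, worstCaseError W adm S μ Φ.1)
        = worstCaseError W adm S μ Φ₀ ∧
      worstCaseError W adm S μ Φ₀ = eLpNorm (S x) 1 μ := by
  have hlow (Φ : {Φ : Z → α → ℝ // ∀ z, MemLp (Φ z) 1 μ}) :
      eLpNorm (S x) 1 μ ≤ worstCaseError W adm S μ Φ.1 :=
    eLpNorm_le_worstCaseError hx hx' hz hz' hS hSx (Φ.2 z).1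
  have hΦ₀_eq : worstCaseError W adm S μ Φ₀ = eLpNorm (S x) 1 μ :=
    le_antisymm hΦ₀_le (hlow ⟨Φ₀, hΦ₀⟩)
  exact ⟨le_antisymm (iInf_le_of_le ⟨Φ₀, hΦ₀⟩ le_rfl) (hΦ₀_eq ▸ le_iInf hlow), hΦ₀_eq⟩

end OptimalRecovery

section HeatRecovery

open MeasureTheory Set

variable {d : ℕ} {t₀ : ℝ} {ω₁ ω₂ : ℝ → ℝ} {M₁ : Set (EuclideanSpace ℝ (Fin d) × ℝ)}
  {M₂ : Set (EuclideanSpace ℝ (Fin d))} {n₁ n₂ : ℕ} {q₁ : Fin n₁ → EuclideanSpace ℝ (Fin d) × ℝ}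
  {q₂ : Fin n₂ → EuclideanSpace ℝ (Fin d)} {e₁ : Fin n₁ → ℝ} {e₂ : Fin n₂ → ℝ}

theorem worstCaseError_heatSolution_LmethTildeOR_le [NeZero d] [NeZero n₁] [NeZero n₂]
    (ht₀ : 0 < t₀) (hω₁ : IsModulusOfContinuity ω₁) (hω₂ : IsModulusOfContinuity ω₂)
    (hM₁ : IsCompact M₁) (hM₂ : IsCompact M₂) (hq₁ : ∀ j, q₁ j ∈ M₁) (hq₂ : ∀ j, q₂ j ∈ M₂) :
    worstCaseError (HtildeOR ω₁ M₁ ×ˢ HtildeOR ω₂ M₂)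
      (fun (p : (_ → ℝ) × (_ → ℝ)) (z : (Fin n₁ → ℝ) × (Fin n₂ → ℝ)) =>
        IsNoisySample q₁ e₁ p.1 z.1 ∧ IsNoisySample q₂ e₂ p.2 z.2)
      (fun p => heatSolution d t₀ p.1 p.2) volume
      (fun z => heatSolution d t₀ (LmethTildeOR ω₁ M₁ q₁ e₁ z.1) (LmethTildeOR ω₂ M₂ q₂ e₂ z.2))
      ≤ (∫⁻ v, ∫⁻ s in Ioc 0 t₀, ENNReal.ofReal (tauTildeOR ω₁ M₁ q₁ e₁ (v, s))) +
        ∫⁻ v, ENNReal.ofReal (tauTildeOR ω₂ M₂ q₂ e₂ v) := by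
  refine iSup₂_le fun p ⟨hf, hg⟩ => iSup₂_le fun z ⟨hz₁, hz₂⟩ => ?_
  obtain ⟨Cf, hCf⟩ := exists_bound_of_mem_HtildeOR hM₁ hf
  obtain ⟨Cg, hCg⟩ := exists_bound_of_mem_HtildeOR hM₂ hg
  have hL₁ := measurable_LmethTildeOR (q := q₁) (e := e₁) hω₁ hM₁.isClosed z.1
  have hL₂ := measurable_LmethTildeOR (q := q₂) (e := e₂) hω₂ hM₂.isClosed z.2
  calc eLpNorm (fun u => heatSolution d t₀ p.1 p.2 u - heatSolution d t₀
          (LmethTildeOR ω₁ M₁ q₁ e₁ z.1) (LmethTildeOR ω₂ M₂ q₂ e₂ z.2) u) 1 volume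
      = eLpNorm (heatSolution d t₀ (p.1 - LmethTildeOR ω₁ M₁ q₁ e₁ z.1)
          (p.2 - LmethTildeOR ω₂ M₂ q₂ e₂ z.2)) 1 volume := by
        rw [heatSolution_sub ht₀ hf.1.measurable hCf hL₁ (norm_LmethTildeOR_le z.1)
          hg.1.measurable hCg hL₂ (norm_LmethTildeOR_le z.2)]
        rfl
    _ ≤ _ := eLpNorm_heatSolution_le ht₀ (hf.1.measurable.sub hL₁) (hg.1.measurable.sub hL₂)
    _ ≤ _ := by
        gcongr with v s v <;> rw [Real.enorm_eq_ofReal_abs] <;> apply ENNReal.ofReal_le_ofReal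
        · exact abs_sub_LmethTildeOR_le hM₁ hq₁ hf hz₁ _
        · exact abs_sub_LmethTildeOR_le hM₂ hq₂ hg hz₂ _

end HeatRecovery

theorem optimal_recovery_heat_time_slice_general
    (d : ℕ) (hd : 0 < d) (t₀ : ℝ) (ht₀ : 0 < t₀)
    (ω₁ ω₂ : ℝ → ℝ)
    (hω₁0 : ω₁ 0 = 0) (hω₁_cont : ContinuousOn ω₁ (Set.Ici 0))
    (hω₁_mono : MonotoneOn ω₁ (Set.Ici 0))
    (hω₁_subadd : ∀ s t : ℝ, 0 ≤ s → 0 ≤ t → ω₁ (s + t) ≤ ω₁ s + ω₁ t)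
    (hω₁_nonneg : ∀ s : ℝ, 0 ≤ s → 0 ≤ ω₁ s)
    (hω₂0 : ω₂ 0 = 0) (hω₂_cont : ContinuousOn ω₂ (Set.Ici 0))
    (hω₂_mono : MonotoneOn ω₂ (Set.Ici 0))
    (hω₂_subadd : ∀ s t : ℝ, 0 ≤ s → 0 ≤ t → ω₂ (s + t) ≤ ω₂ s + ω₂ t)
    (hω₂_nonneg : ∀ s : ℝ, 0 ≤ s → 0 ≤ ω₂ s)
    (M₁ : Set (EuclideanSpace ℝ (Fin d) × ℝ)) (hM₁ : IsCompact M₁)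
    (M₂ : Set (EuclideanSpace ℝ (Fin d))) (hM₂ : IsCompact M₂)
    {n₁ n₂ : ℕ} (hn₁ : 0 < n₁) (hn₂ : 0 < n₂)
    (q₁ : Fin n₁ → EuclideanSpace ℝ (Fin d) × ℝ) (hq₁ : ∀ j, q₁ j ∈ M₁)
    (q₂ : Fin n₂ → EuclideanSpace ℝ (Fin d)) (hq₂ : ∀ j, q₂ j ∈ M₂)
    (e₁ : Fin n₁ → ℝ) (he₁ : ∀ j, 0 ≤ e₁ j)
    (e₂ : Fin n₂ → ℝ) (he₂ : ∀ j, 0 ≤ e₂ j) :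
    -- the heat kernels and the solution operators of `∂x/∂t − Δx = f`, `x(·,0) = g`
    let heatK : ℝ → EuclideanSpace ℝ (Fin d) → EuclideanSpace ℝ (Fin d) → ℝ :=
      fun r u v => (4 * Real.pi * r) ^ (-(d : ℝ) / 2) * Real.exp (-(dist u v) ^ 2 / (4 * r))
    let A₁ : (EuclideanSpace ℝ (Fin d) × ℝ → ℝ) → EuclideanSpace ℝ (Fin d) → ℝ → ℝ :=
      fun f u t => ∫ s in (0 : ℝ)..t, ∫ v, heatK (t - s) u v * f (v, s)
    let A₂ : (EuclideanSpace ℝ (Fin d) → ℝ) → EuclideanSpace ℝ (Fin d) → ℝ → ℝ :=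
      fun g u t => ∫ v, heatK t u v * g v
    let W₁ := HtildeOR ω₁ M₁
    let W₂ := HtildeOR ω₂ M₂
    let τ₁ := tauTildeOR ω₁ M₁ q₁ e₁
    let τ₂ := tauTildeOR ω₂ M₂ q₂ e₂
    let Φ₀ : (Fin n₁ → ℝ) × (Fin n₂ → ℝ) → EuclideanSpace ℝ (Fin d) → ℝ := fun z u =>
      A₁ (LmethTildeOR ω₁ M₁ q₁ e₁ z.1) u t₀ + A₂ (LmethTildeOR ω₂ M₂ q₂ e₂ z.2) u t₀
    let Err : ((Fin n₁ → ℝ) × (Fin n₂ → ℝ) → EuclideanSpace ℝ (Fin d) → ℝ) → ℝ≥0∞ :=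
      fun Φ =>
        ⨆ f ∈ W₁, ⨆ g ∈ W₂, ⨆ z : (Fin n₁ → ℝ) × (Fin n₂ → ℝ),
          ⨆ (_ : (∀ j, |z.1 j - f (q₁ j)| ≤ e₁ j) ∧ ∀ j, |z.2 j - g (q₂ j)| ≤ e₂ j),
            eLpNorm (fun u => (A₁ f u t₀ + A₂ g u t₀) - Φ z u) 1
              (volume : Measure (EuclideanSpace ℝ (Fin d)))
    (⨅ Φ : {Φ : (Fin n₁ → ℝ) × (Fin n₂ → ℝ) → EuclideanSpace ℝ (Fin d) → ℝ //
        ∀ z, MemLp (Φ z) 1 (volume : Measure (EuclideanSpace ℝ (Fin d)))}, Err Φ.1) = Err Φ₀ ∧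
      Err Φ₀ = (∫⁻ v, ∫⁻ s in Set.Ioc (0 : ℝ) t₀, ENNReal.ofReal (τ₁ (v, s))) +
        ∫⁻ v, ENNReal.ofReal (τ₂ v) := by
  intro heatK A₁ A₂ W₁ W₂ τ₁ τ₂ Φ₀ Err
  have : NeZero d := ⟨hd.ne'⟩
  have : NeZero n₁ := ⟨hn₁.ne'⟩
  have : NeZero n₂ := ⟨hn₂.ne'⟩
  have hω₁ : IsModulusOfContinuity ω₁ := ⟨hω₁0, hω₁_cont, hω₁_mono, hω₁_subadd, hω₁_nonneg⟩
  have hω₂ : IsModulusOfContinuity ω₂ := ⟨hω₂0, hω₂_cont, hω₂_mono, hω₂_subadd, hω₂_nonneg⟩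
  have hτ₁ : τ₁ ∈ W₁ := tauTildeOR_mem_HtildeOR hω₁ he₁
  have hτ₂ : τ₂ ∈ W₂ := tauTildeOR_mem_HtildeOR hω₂ he₂
  obtain ⟨C₁, hC₁⟩ := exists_bound_of_mem_HtildeOR hM₁ hτ₁
  obtain ⟨C₂, hC₂⟩ := exists_bound_of_mem_HtildeOR hM₂ hτ₂
  have hErr : Err = worstCaseError (W₁ ×ˢ W₂)
      (fun (p : (_ → ℝ) × (_ → ℝ)) (z : (Fin n₁ → ℝ) × (Fin n₂ → ℝ)) =>
        IsNoisySample q₁ e₁ p.1 z.1 ∧ IsNoisySample q₂ e₂ p.2 z.2)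
      (fun p => heatSolution d t₀ p.1 p.2) volume :=
    funext fun Φ => by rw [worstCaseError, biSup_prod]; rfl
  have hV := eLpNorm_heatSolution_of_nonneg ht₀ hτ₁.1.measurable hC₁
    (tauTildeOR_nonneg hω₁ he₁) hτ₂.1.measurable hC₂ (tauTildeOR_nonneg hω₂ he₂)
  rw [hErr, ← hV]
  have hz₁ := isNoisySample_tauTildeOR_zero hω₁ he₁ hq₁
  have hz₂ := isNoisySample_tauTildeOR_zero hω₂ he₂ hq₂
  refine iInf_worstCaseError_eq (x := (τ₁, τ₂)) (x' := (-τ₁, -τ₂)) (z := 0) ?_ ?_ ?_ ?_ ?_ ?_ ?_ ?_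
  · exact fun z => memLp_heatSolution ht₀ (measurable_LmethTildeOR hω₁ hM₁.isClosed z.1)
      (measurable_LmethTildeOR hω₂ hM₂.isClosed z.2) (integrable_LmethTildeOR hω₁ hM₁ z.1)
      (integrable_LmethTildeOR hω₂ hM₂ z.2)
  · exact ⟨hτ₁, hτ₂⟩
  · exact ⟨neg_mem_HtildeOR hτ₁, neg_mem_HtildeOR hτ₂⟩
  · exact ⟨hz₁, hz₂⟩
  · exact ⟨by simpa using hz₁.neg, by simpa using hz₂.neg⟩
  · exact heatSolution_neg t₀ τ₁ τ₂
  · exact aestronglyMeasurable_heatSolution ht₀.le hτ₁.1.measurable hτ₂.1.measurable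
  · exact (worstCaseError_heatSolution_LmethTildeOR_le ht₀ hω₁ hω₂ hM₁ hM₂ hq₁ hq₂).trans_eq hV.symm

/-- Optimal recovery of the solution to the Cauchy problem for the heat equation,
measured in `L¹` on the time slice `N = ℝ^d × {t₀}`. -/
theorem optimal_recovery_heat_time_slice
    (d : ℕ) (hd : 0 < d) (t₀ : ℝ) (ht₀ : 0 < t₀)
    (ω₁ ω₂ : ℝ → ℝ)
    (hω₁0 : ω₁ 0 = 0) (hω₁_cont : ContinuousOn ω₁ (Set.Ici 0))
    (hω₁_mono : MonotoneOn ω₁ (Set.Ici 0))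
    (hω₁_subadd : ∀ s t : ℝ, 0 ≤ s → 0 ≤ t → ω₁ (s + t) ≤ ω₁ s + ω₁ t)
    (hω₁_nonneg : ∀ s : ℝ, 0 ≤ s → 0 ≤ ω₁ s)
    (hω₂0 : ω₂ 0 = 0) (hω₂_cont : ContinuousOn ω₂ (Set.Ici 0))
    (hω₂_mono : MonotoneOn ω₂ (Set.Ici 0))
    (hω₂_subadd : ∀ s t : ℝ, 0 ≤ s → 0 ≤ t → ω₂ (s + t) ≤ ω₂ s + ω₂ t)
    (hω₂_nonneg : ∀ s : ℝ, 0 ≤ s → 0 ≤ ω₂ s)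
    (M₁ : Set (EuclideanSpace ℝ (Fin d) × ℝ)) (hM₁ : IsCompact M₁)
    (hM₁D : ∀ p ∈ M₁, 0 < p.2)
    (M₂ : Set (EuclideanSpace ℝ (Fin d))) (hM₂ : IsCompact M₂)
    {n₁ n₂ : ℕ} (hn₁ : 0 < n₁) (hn₂ : 0 < n₂)
    (q₁ : Fin n₁ → EuclideanSpace ℝ (Fin d) × ℝ) (hq₁ : ∀ j, q₁ j ∈ M₁)
    (q₂ : Fin n₂ → EuclideanSpace ℝ (Fin d)) (hq₂ : ∀ j, q₂ j ∈ M₂)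
    (e₁ : Fin n₁ → ℝ) (he₁ : ∀ j, 0 ≤ e₁ j)
    (e₂ : Fin n₂ → ℝ) (he₂ : ∀ j, 0 ≤ e₂ j) :
    -- the heat kernels and the solution operators of `∂x/∂t − Δx = f`, `x(·,0) = g`
    let heatK : ℝ → EuclideanSpace ℝ (Fin d) → EuclideanSpace ℝ (Fin d) → ℝ :=
      fun r u v => (4 * Real.pi * r) ^ (-(d : ℝ) / 2) * Real.exp (-(dist u v) ^ 2 / (4 * r))
    let A₁ : (EuclideanSpace ℝ (Fin d) × ℝ → ℝ) → EuclideanSpace ℝ (Fin d) → ℝ → ℝ :=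
      fun f u t => ∫ s in (0 : ℝ)..t, ∫ v, heatK (t - s) u v * f (v, s)
    let A₂ : (EuclideanSpace ℝ (Fin d) → ℝ) → EuclideanSpace ℝ (Fin d) → ℝ → ℝ :=
      fun g u t => ∫ v, heatK t u v * g v
    let W₁ := HtildeOR ω₁ M₁
    let W₂ := HtildeOR ω₂ M₂
    let τ₁ := tauTildeOR ω₁ M₁ q₁ e₁
    let τ₂ := tauTildeOR ω₂ M₂ q₂ e₂
    let Φ₀ : (Fin n₁ → ℝ) × (Fin n₂ → ℝ) → EuclideanSpace ℝ (Fin d) → ℝ := fun z u =>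
      A₁ (LmethTildeOR ω₁ M₁ q₁ e₁ z.1) u t₀ + A₂ (LmethTildeOR ω₂ M₂ q₂ e₂ z.2) u t₀
    let Err : ((Fin n₁ → ℝ) × (Fin n₂ → ℝ) → EuclideanSpace ℝ (Fin d) → ℝ) → ℝ≥0∞ :=
      fun Φ =>
        ⨆ f ∈ W₁, ⨆ g ∈ W₂, ⨆ z : (Fin n₁ → ℝ) × (Fin n₂ → ℝ),
          ⨆ (_ : (∀ j, |z.1 j - f (q₁ j)| ≤ e₁ j) ∧ ∀ j, |z.2 j - g (q₂ j)| ≤ e₂ j),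
            eLpNorm (fun u => (A₁ f u t₀ + A₂ g u t₀) - Φ z u) 1
              (volume : Measure (EuclideanSpace ℝ (Fin d)))
    (⨅ Φ : {Φ : (Fin n₁ → ℝ) × (Fin n₂ → ℝ) → EuclideanSpace ℝ (Fin d) → ℝ //
        ∀ z, MemLp (Φ z) 1 (volume : Measure (EuclideanSpace ℝ (Fin d)))}, Err Φ.1) = Err Φ₀ ∧
      Err Φ₀ = (∫⁻ v, ∫⁻ s in Set.Ioc (0 : ℝ) t₀, ENNReal.ofReal (τ₁ (v, s))) +
        ∫⁻ v, ENNReal.ofReal (τ₂ v) :=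
  optimal_recovery_heat_time_slice_general d hd t₀ ht₀ ω₁ ω₂ hω₁0 hω₁_cont hω₁_mono hω₁_subadd
    hω₁_nonneg hω₂0 hω₂_cont hω₂_mono hω₂_subadd hω₂_nonneg M₁ hM₁ M₂ hM₂ hn₁ hn₂ q₁ hq₁ q₂ hq₂ e₁
    he₁ e₂ he₂
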